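/- Let f : E → ℝ be continuously differentiable with bounded derivative. Then for every t > 0 and all x, h ∈ E, |T_t f(x + h) − T_t f(x)| ≤ ‖h‖ · exp( ‖h‖² / (4t) ) · ( T_t ‖∇f‖(x + h) + T_t ‖∇f‖(x) ), where T_t ‖∇f‖ denotes the Mehler semigroup applied to the function y ↦ ‖∇f(y)‖. -/

import Mathlib

/-!
Write `T_t f(z) = ∫ f(A z + s y) dγ(y)` with `A = e^{-t}` and `s = √(1 - e^{-2t})`. Along the
segment from `x` to `x + h`, the fundamental theorem of calculus and Fubini bound
`|T_t f(x + h) - T_t f(x)|` by `‖A h‖` times the supremum over `u ∈ [0, 1]` of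
`∫ ‖∇f(A x + s (y + u a))‖ dγ(y)`, where `a = s⁻¹ A h`. By the Cameron–Martin formula the density
of `γ` shifted by `u a` is at most `exp (‖a‖² / 2)` times the sum of the densities shifted by `a`
and by `0`, which turns that supremum into `T_t ‖∇f‖(x + h) + T_t ‖∇f‖(x)`. Finally
`A ≤ 1` and `‖a‖² / 2 ≤ ‖h‖² / (4 t)`, since `e^{2t} - 1 ≥ 2 t`.
-/

open MeasureTheory Real

/-- The standard Gaussian measure on the finite-dimensional inner product space
`EuclideanSpace ℝ (Fin n)`. -/
noncomputable def stdGaussian (n : ℕ) : Measure (EuclideanSpace ℝ (Fin n)) :=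
  MeasureTheory.volume.withDensity fun x =>
    ENNReal.ofReal ((2 * Real.pi) ^ (-(n : ℝ) / 2) * Real.exp (-‖x‖ ^ 2 / 2))

/-- The Ornstein–Uhlenbeck (Mehler) semigroup applied to a real-valued function:
`T_t f (x) = ∫ f(e^{−t} x + √(1 − e^{−2t}) y) dγ(y)`. -/
noncomputable def mehler (n : ℕ) (t : ℝ) (f : EuclideanSpace ℝ (Fin n) → ℝ)
    (x : EuclideanSpace ℝ (Fin n)) : ℝ :=
  ∫ y, f (Real.exp (-t) • x + Real.sqrt (1 - Real.exp (-2 * t)) • y) ∂(stdGaussian n)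

open Set

lemma integrable_exp_neg_mul_sq_norm {V : Type*} [NormedAddCommGroup V] [InnerProductSpace ℝ V]
    [FiniteDimensional ℝ V] [MeasurableSpace V] [BorelSpace V] {b : ℝ} (hb : 0 < b) :
    Integrable (fun v : V => exp (-b * ‖v‖ ^ 2)) := by
  have := (GaussianFourier.integrable_cexp_neg_mul_sq_norm_add (b := (b : ℂ))
    (by simpa using hb) 0 (0 : V)).norm
  simp only [zero_mul, add_zero, Complex.norm_exp] at this
  convert this using 2 with v
  norm_cast

lemma exp_mul_sub_le_exp_add_one {u p q : ℝ} (hu₀ : 0 ≤ u) (hu₁ : u ≤ 1) (hq : 0 ≤ q) :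
    exp (u * p - u ^ 2 * q / 2) ≤ exp p + 1 := by
  rcases le_total 0 p with hp | hp
  · linarith [exp_le_exp.2 (show u * p - u ^ 2 * q / 2 ≤ p by nlinarith), exp_pos 0]
  · linarith [exp_le_exp.2 (show u * p - u ^ 2 * q / 2 ≤ 0 by nlinarith), exp_zero, exp_pos p]

lemma sq_exp_neg_div_sqrt_le {t : ℝ} (ht : 0 < t) :
    (exp (-t) / √(1 - exp (-2 * t))) ^ 2 ≤ 1 / (2 * t) := by
  have hlt : exp (-2 * t) < 1 := exp_lt_one_iff.2 (by linarith)
  have hprod : exp (2 * t) * exp (-2 * t) = 1 := by rw [← exp_add]; simp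
  have hsq : exp (-t) ^ 2 = exp (-2 * t) := by rw [← exp_nat_mul]; ring_nf
  rw [div_pow, sq_sqrt (by linarith), hsq, div_le_div_iff₀ (by linarith) (by positivity)]
  nlinarith [add_one_le_exp (2 * t), exp_pos (-2 * t)]

lemma norm_exp_neg_smul_mul_exp_le {V : Type*} [NormedAddCommGroup V] [NormedSpace ℝ V]
    {t : ℝ} (ht : 0 < t) (h : V) :
    ‖exp (-t) • h‖ * exp (‖(√(1 - exp (-2 * t)))⁻¹ • exp (-t) • h‖ ^ 2 / 2)
      ≤ ‖h‖ * exp (‖h‖ ^ 2 / (4 * t)) := by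
  have hexp : ‖exp (-t) • h‖ ≤ ‖h‖ := by
    rw [norm_smul, Real.norm_of_nonneg (exp_pos _).le]
    exact mul_le_of_le_one_left (norm_nonneg h) (exp_le_one_iff.2 (by linarith))
  have hsq : ‖(√(1 - exp (-2 * t)))⁻¹ • exp (-t) • h‖ ^ 2 / 2 ≤ ‖h‖ ^ 2 / (4 * t) := by
    rw [smul_smul, norm_smul, mul_pow, Real.norm_eq_abs, sq_abs, inv_mul_eq_div]
    calc (exp (-t) / √(1 - exp (-2 * t))) ^ 2 * ‖h‖ ^ 2 / 2
        ≤ 1 / (2 * t) * ‖h‖ ^ 2 / 2 := by gcongr; exact sq_exp_neg_div_sqrt_le ht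
      _ = ‖h‖ ^ 2 / (4 * t) := by field_simp; ring
  gcongr

section LineIntegral

variable {E : Type*} [NormedAddCommGroup E] [NormedSpace ℝ E] {f : E → ℝ}

lemma abs_sub_le_integral_norm_fderiv (hf : ContDiff ℝ 1 f) (b v : E) :
    |f (b + v) - f b| ≤ ∫ u in (0 : ℝ)..1, ‖v‖ * ‖fderiv ℝ f (b + u • v)‖ := by
  have hderiv : ∀ u : ℝ,
      HasDerivAt (fun u : ℝ => f (b + u • v)) (fderiv ℝ f (b + u • v) v) u := fun u =>
    (hf.differentiable one_ne_zero _).hasFDerivAt.comp_hasDerivAt u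
      (((hasDerivAt_id u).smul_const v).const_add b |>.congr_deriv (one_smul ℝ v))
  have hcont := hf.continuous_fderiv one_ne_zero
  simpa using norm_sub_le_integral_of_norm_deriv_le_of_le (f := fun u : ℝ => f (b + u • v))
    (B := fun u => ‖v‖ * ‖fderiv ℝ f (b + u • v)‖) zero_le_one
    (fun u _ => (hderiv u).continuousAt.continuousWithinAt)
    (fun u _ => (hderiv u).differentiableAt.differentiableWithinAt)
    (.of_forall fun u _ => by
      rw [(hderiv u).deriv, mul_comm]; exact (fderiv ℝ f _).le_opNorm v)
    (Continuous.intervalIntegrable (by fun_prop) _ _)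

variable [MeasurableSpace E] [BorelSpace E] [SecondCountableTopology E]
  {Ω : Type*} [MeasurableSpace Ω] {μ : Measure Ω} [IsFiniteMeasure μ]

lemma abs_integral_comp_add_sub_le (hf : ContDiff ℝ 1 f) {C : ℝ}
    (hC : ∀ y, ‖fderiv ℝ f y‖ ≤ C) {b : Ω → E} (hb : Measurable b) (v : E)
    (hint₁ : Integrable (fun ω => f (b ω + v)) μ) (hint₀ : Integrable (fun ω => f (b ω)) μ)
    {M : ℝ} (hM : ∀ u ∈ Icc (0 : ℝ) 1, ∫ ω, ‖fderiv ℝ f (b ω + u • v)‖ ∂μ ≤ M) :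
    |∫ ω, f (b ω + v) ∂μ - ∫ ω, f (b ω) ∂μ| ≤ ‖v‖ * M := by
  set G : ℝ → Ω → ℝ := fun u ω => ‖v‖ * ‖fderiv ℝ f (b ω + u • v)‖
  have hG : Integrable (Function.uncurry G) ((volume.restrict (Ioc 0 1)).prod μ) := by
    refine .of_bound ?_ (‖v‖ * C) (.of_forall fun ⟨u, ω⟩ => ?_)
    · have hcont := hf.continuous_fderiv one_ne_zero
      exact (Measurable.const_mul (hcont.norm.measurable.comp
        ((hb.comp measurable_snd).add (measurable_fst.smul_const v))) _).aestronglyMeasurable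
    · simp only [Function.uncurry_apply_pair, G, norm_mul, norm_norm]
      exact mul_le_mul_of_nonneg_left (hC _) (norm_nonneg v)
  calc |∫ ω, f (b ω + v) ∂μ - ∫ ω, f (b ω) ∂μ|
      ≤ ∫ ω, |f (b ω + v) - f (b ω)| ∂μ := by
        rw [← integral_sub hint₁ hint₀]; exact abs_integral_le_integral_abs
    _ ≤ ∫ ω, (∫ u in (0 : ℝ)..1, G u ω) ∂μ := by
        refine integral_mono_of_nonneg (.of_forall fun _ => abs_nonneg _) ?_
          (.of_forall fun ω => abs_sub_le_integral_norm_fderiv hf (b ω) v)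
        simpa only [intervalIntegral.integral_of_le zero_le_one, Function.uncurry_apply_pair]
          using hG.integral_prod_right
    _ = ∫ u in (0 : ℝ)..1, ∫ ω, G u ω ∂μ :=
        (intervalIntegral_integral_swap (by rwa [uIoc_of_le zero_le_one])).symm
    _ ≤ ∫ u in (0 : ℝ)..1, ‖v‖ * M := by
        refine intervalIntegral.integral_mono_on zero_le_one ?_ intervalIntegrable_const
          fun u hu => ?_
        · rw [intervalIntegrable_iff_integrableOn_Ioc_of_le zero_le_one]
          exact hG.integral_prod_left
        rw [integral_const_mul]
        exact mul_le_mul_of_nonneg_left (hM u hu) (norm_nonneg v)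
    _ = ‖v‖ * M := by simp

end LineIntegral

noncomputable def gaussianDensity (n : ℕ) (y : EuclideanSpace ℝ (Fin n)) : ℝ :=
  (2 * π) ^ (-(n : ℝ) / 2) * exp (-‖y‖ ^ 2 / 2)

section Gaussian

variable {n : ℕ}

lemma gaussianDensity_pos (y : EuclideanSpace ℝ (Fin n)) : 0 < gaussianDensity n y := by
  unfold gaussianDensity; positivity

@[fun_prop]
lemma continuous_gaussianDensity : Continuous (gaussianDensity n) := by
  unfold gaussianDensity; fun_prop

lemma integrable_gaussianDensity : Integrable (gaussianDensity n) := by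
  convert (integrable_exp_neg_mul_sq_norm (V := EuclideanSpace ℝ (Fin n)) (b := 1 / 2)
    (by norm_num)).const_mul ((2 * π) ^ (-(n : ℝ) / 2)) using 3 with y
  unfold gaussianDensity
  ring_nf

lemma stdGaussian_eq_withDensity :
    stdGaussian n = volume.withDensity fun y => ENNReal.ofReal (gaussianDensity n y) := rfl

instance : IsFiniteMeasure (stdGaussian n) where
  measure_univ_lt_top := by
    rw [stdGaussian_eq_withDensity, withDensity_apply _ MeasurableSet.univ, setLIntegral_univ]
    exact integrable_gaussianDensity.lintegral_lt_top

lemma integral_stdGaussian (φ : EuclideanSpace ℝ (Fin n) → ℝ) :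
    ∫ y, φ y ∂stdGaussian n = ∫ y, gaussianDensity n y * φ y := by
  rw [stdGaussian_eq_withDensity, integral_withDensity_eq_integral_toReal_smul
    (by fun_prop) (.of_forall fun _ => ENNReal.ofReal_lt_top)]
  simp only [ENNReal.toReal_ofReal (gaussianDensity_pos _).le, smul_eq_mul]

lemma integral_stdGaussian_comp_add (φ : EuclideanSpace ℝ (Fin n) → ℝ)
    (w : EuclideanSpace ℝ (Fin n)) :
    ∫ y, φ (y + w) ∂stdGaussian n = ∫ z, gaussianDensity n (z - w) * φ z := by
  rw [integral_stdGaussian, ← integral_sub_right_eq_self _ w]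
  simp

lemma integrable_stdGaussian_iff {φ : EuclideanSpace ℝ (Fin n) → ℝ} :
    Integrable φ (stdGaussian n) ↔ Integrable (fun y => gaussianDensity n y * φ y) := by
  rw [stdGaussian_eq_withDensity, integrable_withDensity_iff_integrable_smul' (by fun_prop)
    (.of_forall fun _ => ENNReal.ofReal_lt_top)]
  simp only [ENNReal.toReal_ofReal (gaussianDensity_pos _).le, smul_eq_mul]

lemma integrable_norm_stdGaussian :
    Integrable (fun y : EuclideanSpace ℝ (Fin n) => ‖y‖) (stdGaussian n) := by
  rw [integrable_stdGaussian_iff]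
  refine ((integrable_exp_neg_mul_sq_norm (V := EuclideanSpace ℝ (Fin n)) (b := 1 / 4)
    (by norm_num)).const_mul ((2 * π) ^ (-(n : ℝ) / 2))).mono' (by fun_prop)
    (.of_forall fun y => ?_)
  -- `‖y‖ ≤ 1 + ‖y‖² / 4 ≤ exp (‖y‖² / 4)`
  have hy : ‖y‖ ≤ exp (‖y‖ ^ 2 / 4) := by
    nlinarith [add_one_le_exp (‖y‖ ^ 2 / 4), sq_nonneg (‖y‖ - 2)]
  rw [Real.norm_of_nonneg (mul_nonneg (gaussianDensity_pos y).le (norm_nonneg y)),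
    gaussianDensity, mul_assoc]
  gcongr
  calc exp (-‖y‖ ^ 2 / 2) * ‖y‖ ≤ exp (-‖y‖ ^ 2 / 2) * exp (‖y‖ ^ 2 / 4) := by gcongr
    _ = exp (-(1 / 4) * ‖y‖ ^ 2) := by rw [← exp_add]; ring_nf

lemma LipschitzWith.integrable_stdGaussian {K : NNReal} {g : EuclideanSpace ℝ (Fin n) → ℝ}
    (hg : LipschitzWith K g) : Integrable g (stdGaussian n) := by
  refine ((integrable_norm_stdGaussian.const_mul K).add (integrable_const |g 0|)).mono'
    hg.continuous.aestronglyMeasurable (.of_forall fun y => ?_)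
  have := hg.dist_le_mul y 0
  rw [dist_zero_right, Real.dist_eq] at this
  rw [Real.norm_eq_abs, Pi.add_apply]
  linarith [abs_sub_abs_le_abs_sub (g y) (g 0)]

lemma integrable_stdGaussian_comp_add_smul {f : EuclideanSpace ℝ (Fin n) → ℝ}
    (hf : ContDiff ℝ 1 f) {C : ℝ} (hC : ∀ y, ‖fderiv ℝ f y‖ ≤ C)
    (w : EuclideanSpace ℝ (Fin n)) (s : ℝ) :
    Integrable (fun y => f (w + s • y)) (stdGaussian n) := by
  have hlip : LipschitzWith C.toNNReal f := lipschitzWith_of_nnnorm_fderiv_le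
    (hf.differentiable one_ne_zero) fun y => by
      rw [← NNReal.coe_le_coe, coe_nnnorm, Real.coe_toNNReal _ ((norm_nonneg _).trans (hC 0))]
      exact hC y
  exact (hlip.comp ((LipschitzWith.const w).add (lipschitzWith_smul s))).integrable_stdGaussian

lemma gaussianDensity_sub_smul (z a : EuclideanSpace ℝ (Fin n)) (u : ℝ) :
    gaussianDensity n (z - u • a)
      = gaussianDensity n z * exp (u * inner ℝ z a - u ^ 2 * ‖a‖ ^ 2 / 2) := by
  have hnorm : ‖z - u • a‖ ^ 2 = ‖z‖ ^ 2 - 2 * (u * inner ℝ z a) + u ^ 2 * ‖a‖ ^ 2 := by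
    rw [norm_sub_sq_real, real_inner_smul_right, norm_smul, mul_pow, Real.norm_eq_abs, sq_abs]
  rw [gaussianDensity, gaussianDensity, hnorm, mul_assoc, ← exp_add]
  ring_nf

lemma gaussianDensity_sub_smul_le (z a : EuclideanSpace ℝ (Fin n)) {u : ℝ}
    (hu : u ∈ Icc 0 1) :
    gaussianDensity n (z - u • a)
      ≤ exp (‖a‖ ^ 2 / 2) * (gaussianDensity n (z - a) + gaussianDensity n z) := by
  have hz := (gaussianDensity_pos z).le
  have hend : exp (‖a‖ ^ 2 / 2) * gaussianDensity n (z - a)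
      = gaussianDensity n z * exp (inner ℝ z a) := by
    rw [← one_smul ℝ a, gaussianDensity_sub_smul, one_smul, mul_left_comm, ← exp_add]
    ring_nf
  calc gaussianDensity n (z - u • a)
      ≤ gaussianDensity n z * (exp (inner ℝ z a) + 1) := by
        rw [gaussianDensity_sub_smul]
        exact mul_le_mul_of_nonneg_left (exp_mul_sub_le_exp_add_one hu.1 hu.2 (by positivity)) hz
    _ ≤ exp (‖a‖ ^ 2 / 2) * (gaussianDensity n (z - a) + gaussianDensity n z) := by
        rw [mul_add, ← hend, mul_one, mul_add]
        gcongr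
        exact le_mul_of_one_le_left hz (one_le_exp (by positivity))

lemma integral_stdGaussian_comp_add_smul_le {φ : EuclideanSpace ℝ (Fin n) → ℝ}
    (hφ : Measurable φ) (hφ₀ : 0 ≤ φ) {c : ℝ} (hφc : ∀ y, φ y ≤ c)
    (a : EuclideanSpace ℝ (Fin n)) {u : ℝ} (hu : u ∈ Icc 0 1) :
    ∫ y, φ (y + u • a) ∂stdGaussian n
      ≤ exp (‖a‖ ^ 2 / 2) * (∫ y, φ (y + a) ∂stdGaussian n + ∫ y, φ y ∂stdGaussian n) := by
  have hint : ∀ w, Integrable fun z => gaussianDensity n (z - w) * φ z := fun w =>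
    (integrable_gaussianDensity.comp_sub_right w).mul_bdd hφ.aestronglyMeasurable
      (.of_forall fun y => by rw [Real.norm_of_nonneg (hφ₀ y)]; exact hφc y)
  have hint₀ : Integrable fun z => gaussianDensity n z * φ z := by simpa using hint 0
  rw [integral_stdGaussian_comp_add, integral_stdGaussian_comp_add, integral_stdGaussian,
    ← integral_add (hint a) hint₀, ← integral_const_mul]
  refine integral_mono_of_nonneg
    (.of_forall fun z => mul_nonneg (gaussianDensity_pos _).le (hφ₀ z))
    (((hint a).add hint₀).const_mul _) (.of_forall fun z => ?_)
  calc gaussianDensity n (z - u • a) * φ z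
      ≤ exp (‖a‖ ^ 2 / 2) * (gaussianDensity n (z - a) + gaussianDensity n z) * φ z :=
        mul_le_mul_of_nonneg_right (gaussianDensity_sub_smul_le z a hu) (hφ₀ z)
    _ = _ := by ring

lemma integral_stdGaussian_comp_add_smul_add_le {g : EuclideanSpace ℝ (Fin n) → ℝ}
    (hg : Measurable g) (hg₀ : 0 ≤ g) {c : ℝ} (hgc : ∀ y, g y ≤ c)
    (w v : EuclideanSpace ℝ (Fin n)) {s : ℝ} (hs : s ≠ 0) {u : ℝ} (hu : u ∈ Icc 0 1) :
    ∫ y, g (w + s • y + u • v) ∂stdGaussian n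
      ≤ exp (‖s⁻¹ • v‖ ^ 2 / 2)
        * (∫ y, g (w + v + s • y) ∂stdGaussian n + ∫ y, g (w + s • y) ∂stdGaussian n) := by
  have hsv : ∀ r : ℝ, s • r • s⁻¹ • v = r • v := fun r => by
    rw [smul_comm, smul_inv_smul₀ hs]
  convert integral_stdGaussian_comp_add_smul_le (φ := fun z => g (w + s • z)) (by fun_prop)
    (fun z => hg₀ (w + s • z)) (fun _ => hgc _) (s⁻¹ • v) hu using 4 with y
  · rw [smul_add, hsv, add_assoc]
  · ext y
    rw [smul_add, ← one_smul ℝ (s⁻¹ • v), hsv, one_smul, add_right_comm, add_assoc]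

end Gaussian

/-- Proposition 3.3 of the paper in the finite-dimensional Gaussian setting: if `f` is
continuously differentiable with bounded derivative, then for all `t > 0` and `x, h ∈ E`,
`|T_t f(x+h) − T_t f(x)| ≤ ‖h‖ exp(‖h‖²/(4t)) (T_t ‖∇f‖(x+h) + T_t ‖∇f‖(x))`. -/
theorem stmt_6 (n : ℕ) (f : EuclideanSpace ℝ (Fin n) → ℝ)
    (hf : ContDiff ℝ 1 f) (C : ℝ) (hf' : ∀ y, ‖fderiv ℝ f y‖ ≤ C)
    (t : ℝ) (ht : 0 < t) (x h : EuclideanSpace ℝ (Fin n)) :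
    |mehler n t f (x + h) - mehler n t f x|
      ≤ ‖h‖ * Real.exp (‖h‖ ^ 2 / (4 * t))
        * (mehler n t (fun y => ‖gradient f y‖) (x + h)
            + mehler n t (fun y => ‖gradient f y‖) x) := by
  simp only [mehler, gradient, LinearIsometryEquiv.norm_map, smul_add]
  set A := exp (-t)
  set s := √(1 - exp (-2 * t))
  have hs : s ≠ 0 := (sqrt_pos.2 (by linarith [exp_lt_one_iff.2 (by linarith : -2 * t < 0)])).ne'
  have hcont := hf.continuous_fderiv one_ne_zero
  calc |∫ y, f (A • x + A • h + s • y) ∂stdGaussian n - ∫ y, f (A • x + s • y) ∂stdGaussian n|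
      = |∫ y, f (A • x + s • y + A • h) ∂stdGaussian n
          - ∫ y, f (A • x + s • y) ∂stdGaussian n| := by
        simp only [add_right_comm _ (A • h)]
    _ ≤ ‖A • h‖ * (exp (‖s⁻¹ • A • h‖ ^ 2 / 2)
          * (∫ y, ‖fderiv ℝ f (A • x + A • h + s • y)‖ ∂stdGaussian n
            + ∫ y, ‖fderiv ℝ f (A • x + s • y)‖ ∂stdGaussian n)) :=
        abs_integral_comp_add_sub_le hf hf' (by fun_prop) _
          (by simpa only [add_right_comm] using
            integrable_stdGaussian_comp_add_smul hf hf' (A • x + A • h) s)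
          (integrable_stdGaussian_comp_add_smul hf hf' _ _) fun _ hu =>
          integral_stdGaussian_comp_add_smul_add_le (by fun_prop) (fun _ => norm_nonneg _)
            hf' _ _ hs hu
    _ ≤ _ := by
        rw [← mul_assoc]
        exact mul_le_mul_of_nonneg_right (norm_exp_neg_smul_mul_exp_le ht h) (by positivity)
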